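/- arXiv:math/0410136 — 3 statements merged into one kernel-verified Lean document; each statement's English description precedes it below -/
import Mathlib

section
/- Let H be a real inner product space, B a symmetric bilinear form on H, and τ : H → ℝ a linear functional. Suppose W ⊆ H is a finite-dimensional subspace of dimension K such that B(w,w) < 0 for every nonzero w ∈ W, and such that B(ν,ν) ≥ 0 for every ν ∈ H orthogonal to W. Define Ind to be the supremum of dimensions of subspaces U ⊆ H such that τ(v) = 0 for all v ∈ U and B(v,v) < 0 for every nonzero v ∈ U. Then K − 1 ≤ Ind ≤ K. -/
open InnerProductSpace Module

/-!
If `B` is negative definite on `U` and nonnegative on `Wᗮ`, then `U ⊓ Wᗮ = ⊥`, so the orthogonal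
projection onto `W` embeds `U` into `W`; this gives `Ind ≤ K`. Conversely `W ⊓ ker τ` is admissible
and has codimension at most one in `W`, which gives `K - 1 ≤ Ind`.
-/

theorem Submodule.disjoint_of_forall_neg_of_forall_nonneg {R M : Type*} [Semiring R]
    [AddCommMonoid M] [Module R M] {U V : Submodule R M} (q : M → ℝ)
    (hU : ∀ v ∈ U, v ≠ 0 → q v < 0) (hV : ∀ v ∈ V, 0 ≤ q v) : Disjoint U V := by
  refine Submodule.disjoint_def.mpr fun v hvU hvV => ?_
  by_contra hv
  exact (hU v hvU hv).not_ge (hV v hvV)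

theorem Submodule.rank_le_of_disjoint_orthogonal {𝕜 E : Type*} [RCLike 𝕜]
    [NormedAddCommGroup E] [InnerProductSpace 𝕜 E] {U W : Submodule 𝕜 E}
    [W.HasOrthogonalProjection] (h : Disjoint U Wᗮ) : Module.rank 𝕜 U ≤ Module.rank 𝕜 W := by
  refine LinearMap.rank_le_of_injective (W.orthogonalProjectionOnto.toLinearMap ∘ₗ U.subtype) ?_
  rw [← LinearMap.ker_eq_bot, LinearMap.ker_comp, ← Submodule.disjoint_iff_comap_eq_bot]
  simpa [← Submodule.ker_orthogonalProjectionOnto] using h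

theorem Submodule.finrank_sub_one_le_finrank_inf_ker {K V : Type*} [Field K] [AddCommGroup V]
    [Module K V] (W : Submodule K V) [FiniteDimensional K W] (f : Dual K V) :
    finrank K W - 1 ≤ finrank K ↥(W ⊓ LinearMap.ker f) := by
  have hker : finrank K (LinearMap.ker (f ∘ₗ W.subtype)) = finrank K ↥(W ⊓ LinearMap.ker f) := by
    rw [← Submodule.map_comap_subtype, Submodule.finrank_map_subtype_eq, LinearMap.ker_comp]
  have hrange : finrank K (LinearMap.range (f ∘ₗ W.subtype)) ≤ 1 :=
    (Submodule.finrank_le _).trans_eq (finrank_self K)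
  have := LinearMap.finrank_range_add_finrank_ker (f ∘ₗ W.subtype)
  omega

theorem stmt0_general {H : Type*} [NormedAddCommGroup H] [InnerProductSpace ℝ H]
    (B : H →ₗ[ℝ] H →ₗ[ℝ] ℝ)
    (τ : H →ₗ[ℝ] ℝ)
    (W : Submodule ℝ H) [FiniteDimensional ℝ W] (K : ℕ)
    (hK : Module.finrank ℝ W = K)
    (hWneg : ∀ w ∈ W, w ≠ 0 → B w w < 0)
    (hWperp : ∀ ν : H, (∀ w ∈ W, ⟪ν, w⟫_ℝ = 0) → 0 ≤ B ν ν)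
    (Ind : Cardinal)
    (hInd : Ind = sSup {c : Cardinal |
      ∃ U : Submodule ℝ H, (∀ v ∈ U, τ v = 0) ∧
        (∀ v ∈ U, v ≠ 0 → B v v < 0) ∧ c = Module.rank ℝ U}) :
    ((K - 1 : ℕ) : Cardinal) ≤ Ind ∧ Ind ≤ (K : Cardinal) := by
  subst hInd
  refine ⟨le_csSup_of_le ⟨K, ?bound⟩
    ⟨W ⊓ LinearMap.ker τ, fun v hv => hv.2, fun v hv => hWneg v hv.1, rfl⟩ ?_, csSup_le' ?bound⟩
  case bound =>
    rintro _ ⟨U, -, hUneg, rfl⟩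
    rw [← hK, Module.finrank_eq_rank]
    refine Submodule.rank_le_of_disjoint_orthogonal
      (Submodule.disjoint_of_forall_neg_of_forall_nonneg (fun v => B v v) hUneg fun v hv => ?_)
    exact hWperp v ((Submodule.mem_orthogonal' W v).mp hv)
  rw [← Module.finrank_eq_rank, ← hK]
  exact_mod_cast W.finrank_sub_one_le_finrank_inf_ker τ

/-- Abstract form of Lemma `lemma0`: `K - 1 ≤ Ind ≤ K`, where `Ind` is the supremum of
dimensions of subspaces of `H` contained in `ker τ` on which `B` is negative definite,
and `W` is a `K`-dimensional subspace on which `B` is negative definite and whose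
orthogonal complement sees only nonnegative values of `B`. -/
theorem stmt0 {H : Type*} [NormedAddCommGroup H] [InnerProductSpace ℝ H]
    (B : H →ₗ[ℝ] H →ₗ[ℝ] ℝ) (hBsymm : ∀ x y : H, B x y = B y x)
    (τ : H →ₗ[ℝ] ℝ)
    (W : Submodule ℝ H) [FiniteDimensional ℝ W] (K : ℕ)
    (hK : Module.finrank ℝ W = K)
    (hWneg : ∀ w ∈ W, w ≠ 0 → B w w < 0)
    (hWperp : ∀ ν : H, (∀ w ∈ W, ⟪ν, w⟫_ℝ = 0) → 0 ≤ B ν ν)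
    (Ind : Cardinal)
    (hInd : Ind = sSup {c : Cardinal |
      ∃ U : Submodule ℝ H, (∀ v ∈ U, τ v = 0) ∧
        (∀ v ∈ U, v ≠ 0 → B v v < 0) ∧ c = Module.rank ℝ U}) :
    ((K - 1 : ℕ) : Cardinal) ≤ Ind ∧ Ind ≤ (K : Cardinal) :=
  stmt0_general B τ W K hK hWneg hWperp Ind hInd
end

section
/- Let u : ℂ → ℝ be a smooth function satisfying the sinh-Gordon equation ∂_z ∂_{z̄} u + sinh u = 0 on ℂ. Then the function ρ₄ := −(1/2)(∂_z u)³ + ∂_z^{(3)} u satisfies the linearized sinh-Gordon equation ∂_z ∂_{z̄} ρ₄ + (cosh u) · ρ₄ = 0 on ℂ. -/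
/-- The Wirtinger derivative `∂_z f = (1/2)(∂_x f − i ∂_y f)` of a function `f : ℂ → ℂ`,
where `∂_x`, `∂_y` are the real partial derivatives in the directions `1` and `i`. -/
noncomputable def wirtingerZ (f : ℂ → ℂ) : ℂ → ℂ :=
  fun z => (1 / 2 : ℂ) * (fderiv ℝ f z 1 - Complex.I * fderiv ℝ f z Complex.I)

/-- The conjugate Wirtinger derivative `∂_{z̄} f = (1/2)(∂_x f + i ∂_y f)`. -/
noncomputable def wirtingerZbar (f : ℂ → ℂ) : ℂ → ℂ :=
  fun z => (1 / 2 : ℂ) * (fderiv ℝ f z 1 + Complex.I * fderiv ℝ f z Complex.I)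

open Complex

section lemmas
variable {f g : ℂ → ℂ}

lemma contDiff_pd (hf : ContDiff ℝ (⊤ : ℕ∞) f) (v : ℂ) :
    ContDiff ℝ (⊤ : ℕ∞) (fun z => fderiv ℝ f z v) := by
  have h : ContDiff ℝ (⊤ : ℕ∞) (fderiv ℝ f) := hf.fderiv_right (by simp)
  exact (ContinuousLinearMap.apply ℝ ℂ v).contDiff.comp h

lemma pd_comm (hf : ContDiff ℝ (⊤ : ℕ∞) f) (z v w : ℂ) :
    fderiv ℝ (fun x => fderiv ℝ f x v) z w = fderiv ℝ (fun x => fderiv ℝ f x w) z v := by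
  have hdf : DifferentiableAt ℝ (fderiv ℝ f) z :=
    ((hf.fderiv_right (m := (⊤ : ℕ∞)) (by simp)).differentiable (by simp)) z
  have key : ∀ a b : ℂ, fderiv ℝ (fun x => fderiv ℝ f x a) z b
      = fderiv ℝ (fderiv ℝ f) z b a := by
    intro a b
    have : (fun x => fderiv ℝ f x a) = (ContinuousLinearMap.apply ℝ ℂ a) ∘ (fderiv ℝ f) := rfl
    rw [this, fderiv_comp z (ContinuousLinearMap.apply ℝ ℂ a).differentiableAt hdf]
    simp
  rw [key, key]
  exact (hf.contDiffAt.isSymmSndFDerivAt (by rw [minSmoothness_of_isRCLikeNormedField]; exact WithTop.coe_le_coe.mpr le_top)) w v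

lemma contDiff_wz (hf : ContDiff ℝ (⊤ : ℕ∞) f) : ContDiff ℝ (⊤ : ℕ∞) (wirtingerZ f) :=
  contDiff_const.mul ((contDiff_pd hf 1).sub (contDiff_const.mul (contDiff_pd hf I)))

lemma fderiv_wzbar (hf : ContDiff ℝ (⊤ : ℕ∞) f) (z v : ℂ) :
    fderiv ℝ (wirtingerZbar f) z v
      = (1 / 2 : ℂ) * (fderiv ℝ (fun x => fderiv ℝ f x 1) z v
          + Complex.I * fderiv ℝ (fun x => fderiv ℝ f x I) z v) := by
  have h1 : DifferentiableAt ℝ (fun x => fderiv ℝ f x 1) z :=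
    (contDiff_pd hf 1).differentiable (by simp) z
  have hI : DifferentiableAt ℝ (fun x => fderiv ℝ f x I) z :=
    (contDiff_pd hf I).differentiable (by simp) z
  have e : wirtingerZbar f
      = fun x => (1 / 2 : ℂ) * ((fun x => fderiv ℝ f x 1) x + I * (fun x => fderiv ℝ f x I) x) :=
    rfl
  rw [e, fderiv_const_mul (h1.fun_add (hI.const_mul I)), fderiv_fun_add h1 (hI.const_mul I),
    fderiv_const_mul hI]
  simp [smul_eq_mul]
  ring

lemma fderiv_wz (hf : ContDiff ℝ (⊤ : ℕ∞) f) (z v : ℂ) :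
    fderiv ℝ (wirtingerZ f) z v
      = (1 / 2 : ℂ) * (fderiv ℝ (fun x => fderiv ℝ f x 1) z v
          - Complex.I * fderiv ℝ (fun x => fderiv ℝ f x I) z v) := by
  have h1 : DifferentiableAt ℝ (fun x => fderiv ℝ f x 1) z :=
    (contDiff_pd hf 1).differentiable (by simp) z
  have hI : DifferentiableAt ℝ (fun x => fderiv ℝ f x I) z :=
    (contDiff_pd hf I).differentiable (by simp) z
  have e : wirtingerZ f
      = fun x => (1 / 2 : ℂ) * ((fun x => fderiv ℝ f x 1) x - I * (fun x => fderiv ℝ f x I) x) :=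
    rfl
  rw [e, fderiv_const_mul (h1.fun_sub (hI.const_mul I)), fderiv_fun_sub h1 (hI.const_mul I),
    fderiv_const_mul hI]
  simp [smul_eq_mul]

lemma wz_wzbar_comm (hf : ContDiff ℝ (⊤ : ℕ∞) f) :
    wirtingerZ (wirtingerZbar f) = wirtingerZbar (wirtingerZ f) := by
  funext z
  show (1 / 2 : ℂ) * (fderiv ℝ (wirtingerZbar f) z 1 - I * fderiv ℝ (wirtingerZbar f) z I)
      = (1 / 2 : ℂ) * (fderiv ℝ (wirtingerZ f) z 1 + I * fderiv ℝ (wirtingerZ f) z I)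
  rw [fderiv_wzbar hf z 1, fderiv_wzbar hf z I, fderiv_wz hf z 1, fderiv_wz hf z I,
    pd_comm hf z 1 I]
  ring

lemma wz_mul (hf : ContDiff ℝ (⊤ : ℕ∞) f) (hg : ContDiff ℝ (⊤ : ℕ∞) g) (z : ℂ) :
    wirtingerZ (fun x => f x * g x) z = wirtingerZ f z * g z + f z * wirtingerZ g z := by
  have hf' := hf.differentiable (by simp) z
  have hg' := hg.differentiable (by simp) z
  simp only [wirtingerZ, fderiv_fun_mul hf' hg', ContinuousLinearMap.add_apply,
    ContinuousLinearMap.smul_apply, smul_eq_mul]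
  ring

lemma wzbar_mul (hf : ContDiff ℝ (⊤ : ℕ∞) f) (hg : ContDiff ℝ (⊤ : ℕ∞) g) (z : ℂ) :
    wirtingerZbar (fun x => f x * g x) z = wirtingerZbar f z * g z + f z * wirtingerZbar g z := by
  have hf' := hf.differentiable (by simp) z
  have hg' := hg.differentiable (by simp) z
  simp only [wirtingerZbar, fderiv_fun_mul hf' hg', ContinuousLinearMap.add_apply,
    ContinuousLinearMap.smul_apply, smul_eq_mul]
  ring

lemma wz_add (hf : ContDiff ℝ (⊤ : ℕ∞) f) (hg : ContDiff ℝ (⊤ : ℕ∞) g) (z : ℂ) :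
    wirtingerZ (fun x => f x + g x) z = wirtingerZ f z + wirtingerZ g z := by
  have hf' := hf.differentiable (by simp) z
  have hg' := hg.differentiable (by simp) z
  simp only [wirtingerZ, fderiv_fun_add hf' hg', ContinuousLinearMap.add_apply]
  ring

lemma wzbar_add (hf : ContDiff ℝ (⊤ : ℕ∞) f) (hg : ContDiff ℝ (⊤ : ℕ∞) g) (z : ℂ) :
    wirtingerZbar (fun x => f x + g x) z = wirtingerZbar f z + wirtingerZbar g z := by
  have hf' := hf.differentiable (by simp) z
  have hg' := hg.differentiable (by simp) z
  simp only [wirtingerZbar, fderiv_fun_add hf' hg', ContinuousLinearMap.add_apply]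
  ring

lemma wz_const_mul (hf : ContDiff ℝ (⊤ : ℕ∞) f) (c : ℂ) (z : ℂ) :
    wirtingerZ (fun x => c * f x) z = c * wirtingerZ f z := by
  have hf' := hf.differentiable (by simp) z
  simp only [wirtingerZ, fderiv_const_mul hf' c, ContinuousLinearMap.smul_apply, smul_eq_mul]
  ring

lemma wzbar_const_mul (hf : ContDiff ℝ (⊤ : ℕ∞) f) (c : ℂ) (z : ℂ) :
    wirtingerZbar (fun x => c * f x) z = c * wirtingerZbar f z := by
  have hf' := hf.differentiable (by simp) z
  simp only [wirtingerZbar, fderiv_const_mul hf' c, ContinuousLinearMap.smul_apply, smul_eq_mul]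
  ring

lemma fderiv_sinh_comp (hf : ContDiff ℝ (⊤ : ℕ∞) f) (z v : ℂ) :
    fderiv ℝ (fun x => Complex.sinh (f x)) z v = Complex.cosh (f z) * fderiv ℝ f z v := by
  have hf' : HasFDerivAt f (fderiv ℝ f z) z := (hf.differentiable (by simp) z).hasFDerivAt
  have hs := ((Complex.hasDerivAt_sinh (f z)).hasFDerivAt.restrictScalars ℝ).comp z hf'
  have := hs.fderiv
  rw [show (fun x => Complex.sinh (f x)) = Complex.sinh ∘ f from rfl, this]
  simp [mul_comm]

lemma fderiv_cosh_comp (hf : ContDiff ℝ (⊤ : ℕ∞) f) (z v : ℂ) :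
    fderiv ℝ (fun x => Complex.cosh (f x)) z v = Complex.sinh (f z) * fderiv ℝ f z v := by
  have hf' : HasFDerivAt f (fderiv ℝ f z) z := (hf.differentiable (by simp) z).hasFDerivAt
  have hs := ((Complex.hasDerivAt_cosh (f z)).hasFDerivAt.restrictScalars ℝ).comp z hf'
  have := hs.fderiv
  rw [show (fun x => Complex.cosh (f x)) = Complex.cosh ∘ f from rfl, this]
  simp [mul_comm]

lemma wz_sinh (hf : ContDiff ℝ (⊤ : ℕ∞) f) (z : ℂ) :
    wirtingerZ (fun x => Complex.sinh (f x)) z = Complex.cosh (f z) * wirtingerZ f z := by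
  simp only [wirtingerZ, fderiv_sinh_comp hf]
  ring

lemma wz_cosh (hf : ContDiff ℝ (⊤ : ℕ∞) f) (z : ℂ) :
    wirtingerZ (fun x => Complex.cosh (f x)) z = Complex.sinh (f z) * wirtingerZ f z := by
  simp only [wirtingerZ, fderiv_cosh_comp hf]
  ring

end lemmas

/-- If `u : ℂ → ℝ` is smooth and satisfies the sinh-Gordon equation
`∂_z ∂_{z̄} u + sinh u = 0`, then `ρ₄ := −(1/2)(∂_z u)³ + ∂_z^{(3)} u` satisfies the
linearized sinh-Gordon equation `∂_z ∂_{z̄} ρ₄ + (cosh u) ρ₄ = 0`. -/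
theorem stmt6 (u : ℂ → ℝ) (hu : ContDiff ℝ (⊤ : ℕ∞) u)
    (uC : ℂ → ℂ) (huC : uC = fun z => (u z : ℂ))
    (hSG : ∀ z : ℂ, wirtingerZ (wirtingerZbar uC) z + Complex.sinh (uC z) = 0)
    (ρ₄ : ℂ → ℂ)
    (hρ₄ : ρ₄ = fun z => -(1 / 2 : ℂ) * (wirtingerZ uC z) ^ 3 + (wirtingerZ^[3] uC) z) :
    ∀ z : ℂ, wirtingerZ (wirtingerZbar ρ₄) z + Complex.cosh (uC z) * ρ₄ z = 0 := by
  -- smoothness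
  have huC' : ContDiff ℝ (⊤ : ℕ∞) uC := by
    rw [huC]; exact Complex.ofRealCLM.contDiff.comp hu
  have hw : ContDiff ℝ (⊤ : ℕ∞) (wirtingerZ uC) := contDiff_wz huC'
  have hw2 : ContDiff ℝ (⊤ : ℕ∞) (wirtingerZ (wirtingerZ uC)) := contDiff_wz hw
  have hw3 : ContDiff ℝ (⊤ : ℕ∞) (wirtingerZ (wirtingerZ (wirtingerZ uC))) := contDiff_wz hw2
  have hsC : ContDiff ℝ (⊤ : ℕ∞) (fun z => Complex.sinh (uC z)) :=
    (Complex.contDiff_sinh.restrict_scalars ℝ).comp huC'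
  have hcC : ContDiff ℝ (⊤ : ℕ∞) (fun z => Complex.cosh (uC z)) :=
    (Complex.contDiff_cosh.restrict_scalars ℝ).comp huC'
  -- ∂z̄ w = -sinh ∘ uC
  have hbw : wirtingerZbar (wirtingerZ uC) = fun z => -Complex.sinh (uC z) := by
    rw [← wz_wzbar_comm huC']
    funext z
    have := hSG z
    linear_combination this
  -- ∂z̄ w2 = -(cosh ∘ uC * w)
  have hbw2 : wirtingerZbar (wirtingerZ (wirtingerZ uC))
      = fun z => -(Complex.cosh (uC z) * wirtingerZ uC z) := by
    rw [← wz_wzbar_comm hw, hbw]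
    funext z
    have e1 : (fun z => -Complex.sinh (uC z))
        = fun z => (-1 : ℂ) * Complex.sinh (uC z) := by funext z; ring
    rw [e1, wz_const_mul hsC (-1) z, wz_sinh huC' z]
    ring
  -- ∂z̄ w3 = -(sinh·w·w + cosh·w2)
  have hbw3 : wirtingerZbar (wirtingerZ (wirtingerZ (wirtingerZ uC)))
      = fun z => -(Complex.sinh (uC z) * wirtingerZ uC z * wirtingerZ uC z
            + Complex.cosh (uC z) * wirtingerZ (wirtingerZ uC) z) := by
    rw [← wz_wzbar_comm hw2, hbw2]
    funext z
    have e1 : (fun z => -(Complex.cosh (uC z) * wirtingerZ uC z))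
        = fun z => (-1 : ℂ) * ((fun z => Complex.cosh (uC z)) z * wirtingerZ uC z) := by
      funext z; ring
    rw [e1, wz_const_mul (hcC.mul hw) (-1) z, wz_mul hcC hw z, wz_cosh huC' z]
    ring
  -- ∂z̄ ρ₄
  have hρ₄' : ρ₄ = fun z => (-(1 / 2 : ℂ)) * (wirtingerZ uC z * (wirtingerZ uC z * wirtingerZ uC z))
      + wirtingerZ (wirtingerZ (wirtingerZ uC)) z := by
    rw [hρ₄]; funext z
    have : (wirtingerZ^[3] uC) z = wirtingerZ (wirtingerZ (wirtingerZ uC)) z := rfl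
    rw [this]; ring
  have hbρ : wirtingerZbar ρ₄ = fun z =>
      (1 / 2 : ℂ) * (Complex.sinh (uC z) * (wirtingerZ uC z * wirtingerZ uC z))
        + (-1 : ℂ) * (Complex.cosh (uC z) * wirtingerZ (wirtingerZ uC) z) := by
    rw [hρ₄']
    funext z
    rw [wzbar_add (contDiff_const.mul (hw.mul (hw.mul hw))) hw3 z,
      wzbar_const_mul (hw.mul (hw.mul hw)) _ z,
      wzbar_mul hw (hw.mul hw) z, wzbar_mul hw hw z]
    have b1 : wirtingerZbar (wirtingerZ uC) z = -Complex.sinh (uC z) := by rw [hbw]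
    have b3 : wirtingerZbar (wirtingerZ (wirtingerZ (wirtingerZ uC))) z
        = -(Complex.sinh (uC z) * wirtingerZ uC z * wirtingerZ uC z
            + Complex.cosh (uC z) * wirtingerZ (wirtingerZ uC) z) := by rw [hbw3]
    rw [b1, b3]
    ring
  intro z
  rw [hbρ]
  rw [wz_add (contDiff_const.mul (hsC.mul (hw.mul hw))) (contDiff_const.mul (hcC.mul hw2)) z,
    wz_const_mul (hsC.mul (hw.mul hw)) _ z, wz_const_mul (hcC.mul hw2) _ z,
    wz_mul hsC (hw.mul hw) z, wz_mul hw hw z, wz_mul hcC hw2 z,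
    wz_sinh huC' z, wz_cosh huC' z]
  simp only [hρ₄']
  ring
end

section
/- Let u : ℂ → ℝ be a smooth function satisfying the sinh-Gordon equation ∂_z ∂_{z̄} u + sinh u = 0 on ℂ. Then the function ρ₆ := −(3/8)(∂_z u)⁵ + (5/2)(∂_z u)(∂_z^{(2)} u)² + (5/2)(∂_z u)²(∂_z^{(3)} u) − ∂_z^{(5)} u satisfies the linearized sinh-Gordon equation ∂_z ∂_{z̄} ρ₆ + (cosh u) · ρ₆ = 0 on ℂ. -/
open scoped ContDiff

variable {f g : ℂ → ℂ} {z v : ℂ}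

lemma fd_add (hf : Differentiable ℝ f) (hg : Differentiable ℝ g) (z v : ℂ) :
    fderiv ℝ (fun y => f y + g y) z v = fderiv ℝ f z v + fderiv ℝ g z v := by
  rw [fderiv_fun_add (hf z) (hg z)]; simp

lemma fd_sub (hf : Differentiable ℝ f) (hg : Differentiable ℝ g) (z v : ℂ) :
    fderiv ℝ (fun y => f y - g y) z v = fderiv ℝ f z v - fderiv ℝ g z v := by
  rw [fderiv_fun_sub (hf z) (hg z)]; simp

lemma fd_mul (hf : Differentiable ℝ f) (hg : Differentiable ℝ g) (z v : ℂ) :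
    fderiv ℝ (fun y => f y * g y) z v = f z * fderiv ℝ g z v + fderiv ℝ f z v * g z := by
  rw [fderiv_fun_mul (hf z) (hg z)]; simp [smul_eq_mul]; ring

lemma fd_neg (f : ℂ → ℂ) (z v : ℂ) : fderiv ℝ (fun y => -f y) z v = -fderiv ℝ f z v := by
  rw [fderiv_fun_neg]; simp

lemma fd_const (a z v : ℂ) : fderiv ℝ (fun _ : ℂ => a) z v = 0 := by
  simp

lemma fd_const_mul (hg : Differentiable ℝ g) (a z v : ℂ) :
    fderiv ℝ (fun y => a * g y) z v = a * fderiv ℝ g z v := by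
  rw [fderiv_const_mul (hg z)]; simp

lemma fd_sinh (hf : Differentiable ℝ f) (z v : ℂ) :
    fderiv ℝ (fun y => Complex.sinh (f y)) z v = Complex.cosh (f z) * fderiv ℝ f z v := by
  have h1 : HasFDerivAt Complex.sinh
      (((1 : ℂ →L[ℂ] ℂ).smulRight (Complex.cosh (f z))).restrictScalars ℝ) (f z) :=
    ((Complex.hasDerivAt_sinh (f z)).hasFDerivAt).restrictScalars ℝ
  rw [show (fun y => Complex.sinh (f y)) = Complex.sinh ∘ f from rfl,
    (h1.comp z (hf z).hasFDerivAt).fderiv]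
  simp [mul_comm]

lemma fd_cosh (hf : Differentiable ℝ f) (z v : ℂ) :
    fderiv ℝ (fun y => Complex.cosh (f y)) z v = Complex.sinh (f z) * fderiv ℝ f z v := by
  have h1 : HasFDerivAt Complex.cosh
      (((1 : ℂ →L[ℂ] ℂ).smulRight (Complex.sinh (f z))).restrictScalars ℝ) (f z) :=
    ((Complex.hasDerivAt_cosh (f z)).hasFDerivAt).restrictScalars ℝ
  rw [show (fun y => Complex.cosh (f y)) = Complex.cosh ∘ f from rfl,
    (h1.comp z (hf z).hasFDerivAt).fderiv]
  simp [mul_comm]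


lemma wsdiff (h : ContDiff ℝ ∞ f) : Differentiable ℝ f :=
  h.differentiable (by simp)

lemma smooth_fd (hf : ContDiff ℝ ∞ f) (a : ℂ) : ContDiff ℝ ∞ (fun y => fderiv ℝ f y a) :=
  ((hf.fderiv_right (m := ∞) (by rfl)).clm_apply contDiff_const)

lemma smooth_wZ (hf : ContDiff ℝ ∞ f) : ContDiff ℝ ∞ (wirtingerZ f) := by
  unfold wirtingerZ
  exact contDiff_const.mul ((smooth_fd hf 1).sub (contDiff_const.mul (smooth_fd hf Complex.I)))

lemma smooth_wZbar (hf : ContDiff ℝ ∞ f) : ContDiff ℝ ∞ (wirtingerZbar f) := by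
  unfold wirtingerZbar
  exact contDiff_const.mul ((smooth_fd hf 1).add (contDiff_const.mul (smooth_fd hf Complex.I)))

lemma wZ_add (hf : Differentiable ℝ f) (hg : Differentiable ℝ g) (z : ℂ) :
    wirtingerZ (fun y => f y + g y) z = wirtingerZ f z + wirtingerZ g z := by
  unfold wirtingerZ; rw [fd_add hf hg z 1, fd_add hf hg z Complex.I]; ring

lemma wZ_sub (hf : Differentiable ℝ f) (hg : Differentiable ℝ g) (z : ℂ) :
    wirtingerZ (fun y => f y - g y) z = wirtingerZ f z - wirtingerZ g z := by
  unfold wirtingerZ; rw [fd_sub hf hg z 1, fd_sub hf hg z Complex.I]; ring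

lemma wZ_mul (hf : Differentiable ℝ f) (hg : Differentiable ℝ g) (z : ℂ) :
    wirtingerZ (fun y => f y * g y) z = wirtingerZ f z * g z + f z * wirtingerZ g z := by
  unfold wirtingerZ; rw [fd_mul hf hg z 1, fd_mul hf hg z Complex.I]; ring

lemma wZ_neg (f : ℂ → ℂ) (z : ℂ) : wirtingerZ (fun y => -f y) z = -wirtingerZ f z := by
  unfold wirtingerZ; rw [fd_neg f z 1, fd_neg f z Complex.I]; ring

lemma wZ_const (a z : ℂ) : wirtingerZ (fun _ => a) z = 0 := by
  unfold wirtingerZ; rw [fd_const a z 1, fd_const a z Complex.I]; ring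

lemma wZ_sinh (hf : Differentiable ℝ f) (z : ℂ) :
    wirtingerZ (fun y => Complex.sinh (f y)) z = Complex.cosh (f z) * wirtingerZ f z := by
  unfold wirtingerZ; rw [fd_sinh hf z 1, fd_sinh hf z Complex.I]; ring

lemma wZ_cosh (hf : Differentiable ℝ f) (z : ℂ) :
    wirtingerZ (fun y => Complex.cosh (f y)) z = Complex.sinh (f z) * wirtingerZ f z := by
  unfold wirtingerZ; rw [fd_cosh hf z 1, fd_cosh hf z Complex.I]; ring

lemma wZbar_add (hf : Differentiable ℝ f) (hg : Differentiable ℝ g) (z : ℂ) :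
    wirtingerZbar (fun y => f y + g y) z = wirtingerZbar f z + wirtingerZbar g z := by
  unfold wirtingerZbar; rw [fd_add hf hg z 1, fd_add hf hg z Complex.I]; ring

lemma wZbar_sub (hf : Differentiable ℝ f) (hg : Differentiable ℝ g) (z : ℂ) :
    wirtingerZbar (fun y => f y - g y) z = wirtingerZbar f z - wirtingerZbar g z := by
  unfold wirtingerZbar; rw [fd_sub hf hg z 1, fd_sub hf hg z Complex.I]; ring

lemma wZbar_mul (hf : Differentiable ℝ f) (hg : Differentiable ℝ g) (z : ℂ) :
    wirtingerZbar (fun y => f y * g y) z = wirtingerZbar f z * g z + f z * wirtingerZbar g z := by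
  unfold wirtingerZbar; rw [fd_mul hf hg z 1, fd_mul hf hg z Complex.I]; ring

lemma wZbar_neg (f : ℂ → ℂ) (z : ℂ) : wirtingerZbar (fun y => -f y) z = -wirtingerZbar f z := by
  unfold wirtingerZbar; rw [fd_neg f z 1, fd_neg f z Complex.I]; ring

lemma wZbar_const (a z : ℂ) : wirtingerZbar (fun _ => a) z = 0 := by
  unfold wirtingerZbar; rw [fd_const a z 1, fd_const a z Complex.I]; ring

lemma fd_fd (hf : ContDiff ℝ ∞ f) (z v w : ℂ) :
    fderiv ℝ (fun y => fderiv ℝ f y w) z v = fderiv ℝ (fun y => fderiv ℝ f y v) z w := by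
  have hd : DifferentiableAt ℝ (fderiv ℝ f) z := ((hf.fderiv_right (m := ∞) (by rfl)).differentiable (by simp)) z
  have e : ∀ a : ℂ, fderiv ℝ (fun y => fderiv ℝ f y a) z = (fderiv ℝ (fderiv ℝ f) z).flip a := by
    intro a
    have h := fderiv_clm_apply (c := fderiv ℝ f) (u := fun _ => a) hd (differentiableAt_const a)
    simpa using h
  have hsymm : IsSymmSndFDerivAt ℝ f z :=
    hf.contDiffAt.isSymmSndFDerivAt (by simp; exact WithTop.coe_le_coe.2 le_top)
  rw [e, e]
  simpa using hsymm v w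

lemma wz_comm (hf : ContDiff ℝ ∞ f) :
    wirtingerZbar (wirtingerZ f) = wirtingerZ (wirtingerZbar f) := by
  have hv : ∀ a : ℂ, Differentiable ℝ (fun y => fderiv ℝ f y a) := fun a => wsdiff (smooth_fd hf a)
  funext z
  have key : ∀ (s : ℂ) (g : ℂ → ℂ), g = (fun y => (1 / 2 : ℂ) * (fderiv ℝ f y 1 + s * fderiv ℝ f y Complex.I)) →
      ∀ v : ℂ, fderiv ℝ g z v
      = (1 / 2 : ℂ) * (fderiv ℝ (fun y => fderiv ℝ f y 1) z v
          + s * fderiv ℝ (fun y => fderiv ℝ f y Complex.I) z v) := by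
    intro s g hg v
    rw [hg]
    rw [fd_const_mul ((hv 1).fun_add fun y => ((hv Complex.I y).const_mul s)) _ z v,
      fd_add (hv 1) (fun y => (hv Complex.I y).const_mul s) z v,
      fd_const_mul (hv Complex.I) s z v]
  have hZ : wirtingerZ f = fun y => (1 / 2 : ℂ) * (fderiv ℝ f y 1 + (-Complex.I) * fderiv ℝ f y Complex.I) := by
    funext y; unfold wirtingerZ; ring
  have hZb : wirtingerZbar f = fun y => (1 / 2 : ℂ) * (fderiv ℝ f y 1 + Complex.I * fderiv ℝ f y Complex.I) := by
    funext y; unfold wirtingerZbar; ring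
  have k1 := key (-Complex.I) (wirtingerZ f) hZ
  have k2 := key Complex.I (wirtingerZbar f) hZb
  show (1 / 2 : ℂ) * (fderiv ℝ (wirtingerZ f) z 1 + Complex.I * fderiv ℝ (wirtingerZ f) z Complex.I)
    = (1 / 2 : ℂ) * (fderiv ℝ (wirtingerZbar f) z 1 - Complex.I * fderiv ℝ (wirtingerZbar f) z Complex.I)
  rw [k1 1, k1 Complex.I, k2 1, k2 Complex.I, fd_fd hf z 1 Complex.I]
  ring



/-- If `u : ℂ → ℝ` is smooth and satisfies the sinh-Gordon equation
`∂_z ∂_{z̄} u + sinh u = 0`, then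
`ρ₆ := −(3/8)(∂_z u)⁵ + (5/2)(∂_z u)(∂_z^{(2)} u)² + (5/2)(∂_z u)²(∂_z^{(3)} u) − ∂_z^{(5)} u`
satisfies the linearized sinh-Gordon equation `∂_z ∂_{z̄} ρ₆ + (cosh u) ρ₆ = 0`. -/
theorem stmt7 (u : ℂ → ℝ) (hu : ContDiff ℝ (⊤ : ℕ∞) u)
    (uC : ℂ → ℂ) (huC : uC = fun z => (u z : ℂ))
    (hSG : ∀ z : ℂ, wirtingerZ (wirtingerZbar uC) z + Complex.sinh (uC z) = 0)
    (ρ₆ : ℂ → ℂ)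
    (hρ₆ : ρ₆ = fun z =>
      -(3 / 8 : ℂ) * (wirtingerZ uC z) ^ 5
      + (5 / 2 : ℂ) * (wirtingerZ uC z) * ((wirtingerZ^[2] uC) z) ^ 2
      + (5 / 2 : ℂ) * (wirtingerZ uC z) ^ 2 * ((wirtingerZ^[3] uC) z)
      - (wirtingerZ^[5] uC) z) :
    ∀ z : ℂ, wirtingerZ (wirtingerZbar ρ₆) z + Complex.cosh (uC z) * ρ₆ z = 0 := by
  have hsu : ContDiff ℝ ∞ uC := by
    rw [huC]; exact Complex.ofRealCLM.contDiff.comp (hu.of_le (by simp))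
  have hs1 : ContDiff ℝ ∞ (wirtingerZ uC) := smooth_wZ hsu
  have hs2 : ContDiff ℝ ∞ (wirtingerZ (wirtingerZ uC)) := smooth_wZ hs1
  have hs3 : ContDiff ℝ ∞ (wirtingerZ (wirtingerZ (wirtingerZ uC))) := smooth_wZ hs2
  have hs4 : ContDiff ℝ ∞ (wirtingerZ (wirtingerZ (wirtingerZ (wirtingerZ uC)))) := smooth_wZ hs3
  have hs5 : ContDiff ℝ ∞ (wirtingerZ (wirtingerZ (wirtingerZ (wirtingerZ (wirtingerZ uC))))) := smooth_wZ hs4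
  have hd0 : Differentiable ℝ uC := wsdiff hsu
  have hd1 : Differentiable ℝ (wirtingerZ uC) := wsdiff hs1
  have hd2 : Differentiable ℝ (wirtingerZ (wirtingerZ uC)) := wsdiff hs2
  have hd3 : Differentiable ℝ (wirtingerZ (wirtingerZ (wirtingerZ uC))) := wsdiff hs3
  have hd4 : Differentiable ℝ (wirtingerZ (wirtingerZ (wirtingerZ (wirtingerZ uC)))) := wsdiff hs4
  have hd5 : Differentiable ℝ (wirtingerZ (wirtingerZ (wirtingerZ (wirtingerZ (wirtingerZ uC))))) := wsdiff hs5
  have hdsinh : Differentiable ℝ (fun y => Complex.sinh (uC y)) :=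
    wsdiff ((Complex.contDiff_sinh.restrict_scalars ℝ).comp hsu)
  have hdcosh : Differentiable ℝ (fun y => Complex.cosh (uC y)) :=
    wsdiff ((Complex.contDiff_cosh.restrict_scalars ℝ).comp hsu)
  have hb1 : ∀ z, wirtingerZbar (wirtingerZ uC) z = -Complex.sinh (uC z) := by
    intro z
    rw [congrFun (wz_comm hsu) z]
    linear_combination hSG z
  have hb2 : ∀ z, wirtingerZbar (wirtingerZ (wirtingerZ uC)) z = -(Complex.cosh (uC z) * (wirtingerZ uC) z) := by
    intro z
    rw [congrFun (wz_comm hs1) z,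
      show wirtingerZbar (wirtingerZ uC) = fun y => -Complex.sinh (uC y) from funext hb1]
    simp (disch := fun_prop) only [wZ_neg, wZ_sinh]
  have hb3 : ∀ z, wirtingerZbar (wirtingerZ (wirtingerZ (wirtingerZ uC))) z
      = -(Complex.sinh (uC z) * (wirtingerZ uC) z * (wirtingerZ uC) z + Complex.cosh (uC z) * (wirtingerZ (wirtingerZ uC)) z) := by
    intro z
    rw [congrFun (wz_comm hs2) z,
      show wirtingerZbar (wirtingerZ (wirtingerZ uC)) = fun y => -(Complex.cosh (uC y) * (wirtingerZ uC) y) from funext hb2]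
    simp (disch := fun_prop) only [wZ_neg, wZ_mul, wZ_cosh]
    try ring
  have hb4 : ∀ z, wirtingerZbar (wirtingerZ (wirtingerZ (wirtingerZ (wirtingerZ uC)))) z
      = -(Complex.cosh (uC z) * (wirtingerZ uC) z * (wirtingerZ uC) z * (wirtingerZ uC) z
        + (3:ℂ) * Complex.sinh (uC z) * (wirtingerZ uC) z * (wirtingerZ (wirtingerZ uC)) z + Complex.cosh (uC z) * (wirtingerZ (wirtingerZ (wirtingerZ uC))) z) := by
    intro z
    rw [congrFun (wz_comm hs3) z,
      show wirtingerZbar (wirtingerZ (wirtingerZ (wirtingerZ uC)))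
          = fun y => -(Complex.sinh (uC y) * (wirtingerZ uC) y * (wirtingerZ uC) y + Complex.cosh (uC y) * (wirtingerZ (wirtingerZ uC)) y) from funext hb3]
    simp (disch := fun_prop) only [wZ_neg, wZ_add, wZ_mul, wZ_sinh, wZ_cosh]
    try ring
  have hb5 : ∀ z, wirtingerZbar (wirtingerZ (wirtingerZ (wirtingerZ (wirtingerZ (wirtingerZ uC))))) z
      = -(Complex.sinh (uC z) * (wirtingerZ uC) z * (wirtingerZ uC) z * (wirtingerZ uC) z * (wirtingerZ uC) z
        + (6:ℂ) * Complex.cosh (uC z) * (wirtingerZ uC) z * (wirtingerZ uC) z * (wirtingerZ (wirtingerZ uC)) z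
        + (3:ℂ) * Complex.sinh (uC z) * (wirtingerZ (wirtingerZ uC)) z * (wirtingerZ (wirtingerZ uC)) z
        + (4:ℂ) * Complex.sinh (uC z) * (wirtingerZ uC) z * (wirtingerZ (wirtingerZ (wirtingerZ uC))) z + Complex.cosh (uC z) * (wirtingerZ (wirtingerZ (wirtingerZ (wirtingerZ uC)))) z) := by
    intro z
    rw [congrFun (wz_comm hs4) z,
      show wirtingerZbar (wirtingerZ (wirtingerZ (wirtingerZ (wirtingerZ uC))))
          = fun y => -(Complex.cosh (uC y) * (wirtingerZ uC) y * (wirtingerZ uC) y * (wirtingerZ uC) y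
            + (3:ℂ) * Complex.sinh (uC y) * (wirtingerZ uC) y * (wirtingerZ (wirtingerZ uC)) y + Complex.cosh (uC y) * (wirtingerZ (wirtingerZ (wirtingerZ uC))) y) from funext hb4]
    simp (disch := fun_prop) only [wZ_neg, wZ_add, wZ_mul, wZ_const, wZ_sinh, wZ_cosh]
    try ring
  have hρ' : ρ₆ = fun y =>
      -(3/8 : ℂ) * ((wirtingerZ uC) y * (wirtingerZ uC) y * (wirtingerZ uC) y * (wirtingerZ uC) y * (wirtingerZ uC) y)
      + (5/2 : ℂ) * ((wirtingerZ uC) y * (wirtingerZ (wirtingerZ uC)) y * (wirtingerZ (wirtingerZ uC)) y)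
      + (5/2 : ℂ) * ((wirtingerZ uC) y * (wirtingerZ uC) y * (wirtingerZ (wirtingerZ (wirtingerZ uC))) y)
      - (wirtingerZ (wirtingerZ (wirtingerZ (wirtingerZ (wirtingerZ uC))))) y := by
    rw [hρ₆]
    funext y
    have e2 : wirtingerZ^[2] uC = (wirtingerZ (wirtingerZ uC)) := rfl
    have e3 : wirtingerZ^[3] uC = (wirtingerZ (wirtingerZ (wirtingerZ uC))) := rfl
    have e5 : wirtingerZ^[5] uC = (wirtingerZ (wirtingerZ (wirtingerZ (wirtingerZ (wirtingerZ uC))))) := rfl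
    rw [e2, e3, e5]
    ring
  have hbρ : ∀ z, wirtingerZbar ρ₆ z =
      (3/8 : ℂ) * Complex.sinh (uC z) * (wirtingerZ uC) z * (wirtingerZ uC) z * (wirtingerZ uC) z * (wirtingerZ uC) z
      + (1/2 : ℂ) * Complex.sinh (uC z) * (wirtingerZ (wirtingerZ uC)) z * (wirtingerZ (wirtingerZ uC)) z
      - (3/2 : ℂ) * Complex.cosh (uC z) * (wirtingerZ uC) z * (wirtingerZ uC) z * (wirtingerZ (wirtingerZ uC)) z
      - Complex.sinh (uC z) * (wirtingerZ uC) z * (wirtingerZ (wirtingerZ (wirtingerZ uC))) z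
      + Complex.cosh (uC z) * (wirtingerZ (wirtingerZ (wirtingerZ (wirtingerZ uC)))) z := by
    intro z
    rw [hρ']
    simp (disch := fun_prop) only [wZbar_add, wZbar_sub, wZbar_mul, wZbar_neg, wZbar_const,
      hb1, hb2, hb3, hb4, hb5]
    try ring
  intro z
  rw [show wirtingerZbar ρ₆ = fun y =>
      (3/8 : ℂ) * Complex.sinh (uC y) * (wirtingerZ uC) y * (wirtingerZ uC) y * (wirtingerZ uC) y * (wirtingerZ uC) y
      + (1/2 : ℂ) * Complex.sinh (uC y) * (wirtingerZ (wirtingerZ uC)) y * (wirtingerZ (wirtingerZ uC)) y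
      - (3/2 : ℂ) * Complex.cosh (uC y) * (wirtingerZ uC) y * (wirtingerZ uC) y * (wirtingerZ (wirtingerZ uC)) y
      - Complex.sinh (uC y) * (wirtingerZ uC) y * (wirtingerZ (wirtingerZ (wirtingerZ uC))) y
      + Complex.cosh (uC y) * (wirtingerZ (wirtingerZ (wirtingerZ (wirtingerZ uC)))) y from funext hbρ, hρ']
  simp (disch := fun_prop) only [wZ_add, wZ_sub, wZ_mul, wZ_neg, wZ_const, wZ_sinh, wZ_cosh]
  ring
end
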